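/- arXiv:2605.22129 — 3 statements merged into one kernel-verified Lean document; each statement's English description precedes it below -/
import Mathlib

section
/- If L₀ and L₁ are m × n-weaves in T² × I, both in standard position, whose weaving diagrams coincide (for all i ∈ {1,…,m} and j ∈ {1,…,n}, the i-th warp of L₀ is above the j-th weft of L₀ if and only if the i-th warp of L₁ is above the j-th weft of L₁), then L₀ and L₁ are isotopic links in T² × I. -/
/-!
Both weaves are unions of graphs of height functions over the standard lines, so interpolating
the heights linearly gives a motion of the strands; equal weaving diagrams mean that at no
crossing the two heights ever meet. Such a motion is realised by an isotopy preserving each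
fibre `{(x, y)} × I`: over `(x, y)` at time `t` we need an increasing homeomorphism of `I` sending
the (at most two) heights of the strands through `(x, y)` at time `0` to their heights at time `t`.
Near any point such fibre maps exist explicitly (affine maps in the log-odds coordinate), and
since they form a convex set, a partition of unity glues them to a global continuous family.
-/

noncomputable section

open unitInterval Topology

/-- The circle `S¹ = ℝ/ℤ`. -/
abbrev S1 : Type := AddCircle (1 : ℝ)

/-- The thickened torus `T² × I`. -/
abbrev Thick : Type := S1 × S1 × I

/-- Projection to the first `S¹`-coordinate. -/
def p1 (q : Thick) : S1 := q.1

/-- Projection to the second `S¹`-coordinate. -/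
def p2 (q : Thick) : S1 := q.2.1

/-- Projection to the `I`-coordinate, as a real number. -/
def p3 (q : Thick) : ℝ := (q.2.2 : ℝ)

/-- A warp: image of an embedding of the circle into the interior of `T² × I`
with constant first coordinate whose second coordinate is a homeomorphism. -/
def IsWarp (K : Set Thick) : Prop :=
  ∃ ι : S1 → Thick, IsEmbedding ι ∧ Set.range ι = K ∧
    (∀ s, p3 (ι s) ∈ Set.Ioo (0:ℝ) 1) ∧
    (∃ x : S1, ∀ s, p1 (ι s) = x) ∧
    IsHomeomorph (fun s => p2 (ι s))

/-- A weft: image of an embedding of the circle into the interior of `T² × I`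
with constant second coordinate whose first coordinate is a homeomorphism. -/
def IsWeft (K : Set Thick) : Prop :=
  ∃ ι : S1 → Thick, IsEmbedding ι ∧ Set.range ι = K ∧
    (∀ s, p3 (ι s) ∈ Set.Ioo (0:ℝ) 1) ∧
    (∃ y : S1, ∀ s, p2 (ι s) = y) ∧
    IsHomeomorph (fun s => p1 (ι s))

/-- An `m × n`-weave: a disjoint union of `m` warps and `n` wefts in `T² × I`. -/
structure Weave (m n : ℕ) where
  warp : Fin m → Set Thick
  weft : Fin n → Set Thick
  warp_isWarp : ∀ i, IsWarp (warp i)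
  weft_isWeft : ∀ j, IsWeft (weft j)
  disj : Pairwise (Function.onFun Disjoint (Sum.elim warp weft))

/-- The underlying link (subset of `T² × I`) of a weave. -/
def Weave.carrier {m n : ℕ} (W : Weave m n) : Set Thick :=
  (⋃ i, W.warp i) ∪ ⋃ j, W.weft j

/-- A subset of `T² × I` is a weave if it is the carrier of some `m × n`-weave. -/
def IsWeaveSet (L : Set Thick) : Prop :=
  ∃ (m n : ℕ) (W : Weave m n), W.carrier = L

/-- `F : (T² × I) × [0,1] → T² × I` is an ambient isotopy from `L₀` to `L₁`. -/
def IsAmbientIsotopy (F : Thick × I → Thick) (L0 L1 : Set Thick) : Prop :=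
  Continuous F ∧ (∀ t : I, IsHomeomorph (fun q => F (q, t))) ∧
    (∀ q, F (q, 0) = q) ∧ (fun q => F (q, 1)) '' L0 = L1

/-- Two links in `T² × I` are isotopic. -/
def Isotopic (L0 L1 : Set Thick) : Prop :=
  ∃ F : Thick × I → Thick, IsAmbientIsotopy F L0 L1

/-- The warp `K` is above the weft `K'`: at the (unique) crossing the point of `K`
has larger third coordinate. -/
def Above (K K' : Set Thick) : Prop :=
  ∃ q ∈ K, ∃ q' ∈ K', p1 q' = p1 q ∧ p2 q = p2 q' ∧ p3 q' < p3 q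

/-- Two warps of a weave are comparable with respect to the wefts:
one crossing function is pointwise ≤ the other. -/
def ComparableWarps {m n : ℕ} (W : Weave m n) (i i' : Fin m) : Prop :=
  (∀ j, Above (W.warp i) (W.weft j) → Above (W.warp i') (W.weft j)) ∨
  (∀ j, Above (W.warp i') (W.weft j) → Above (W.warp i) (W.weft j))

/-- A weave is in standard position if the `i`-th warp has first coordinate
`(2i-1)/2m` and the `j`-th weft has second coordinate `(2j-1)/2n` (0-indexed:
`(2i+1)/2m`). -/
def StdPos {m n : ℕ} (W : Weave m n) : Prop :=
  (∀ i : Fin m, ∀ q ∈ W.warp i,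
      p1 q = ((((2 * (i : ℕ) + 1 : ℝ)) / (2 * (m : ℝ)) : ℝ) : S1)) ∧
  (∀ j : Fin n, ∀ q ∈ W.weft j,
      p2 q = ((((2 * (j : ℕ) + 1 : ℝ)) / (2 * (n : ℝ)) : ℝ) : S1))

open Set Real

def logOdds (z : ℝ) : ℝ := log (z / (1 - z))

lemma logOdds_strictMonoOn : StrictMonoOn logOdds (Ioo 0 1) := by
  intro a ha b hb hab
  refine log_lt_log (div_pos ha.1 (sub_pos.2 ha.2)) ?_
  rw [div_lt_div_iff₀ (sub_pos.2 ha.2) (sub_pos.2 hb.2)]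
  nlinarith

lemma Continuous.logOdds {X : Type*} [TopologicalSpace X] {f : X → ℝ} (hf : Continuous f)
    (hf01 : ∀ x, f x ∈ Ioo (0 : ℝ) 1) : Continuous fun x => logOdds (f x) :=
  (hf.div (continuous_const.sub hf) fun x => (sub_pos.2 (hf01 x).2).ne').log
    fun x => (div_pos (hf01 x).1 (sub_pos.2 (hf01 x).2)).ne'

lemma div_logOdds_sub_pos {a b c d : ℝ} (ha : a ∈ Ioo (0 : ℝ) 1) (hb : b ∈ Ioo (0 : ℝ) 1)
    (hc : c ∈ Ioo (0 : ℝ) 1) (hd : d ∈ Ioo (0 : ℝ) 1) (h : 0 < (a - b) * (c - d)) :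
    0 < (logOdds a - logOdds b) / (logOdds c - logOdds d) := by
  rcases pos_and_pos_or_neg_and_neg_of_mul_pos h with ⟨h1, h2⟩ | ⟨h1, h2⟩
  · exact div_pos (sub_pos.2 (logOdds_strictMonoOn hb ha (by linarith)))
      (sub_pos.2 (logOdds_strictMonoOn hd hc (by linarith)))
  · exact div_pos_of_neg_of_neg (sub_neg.2 (logOdds_strictMonoOn ha hb (by linarith)))
      (sub_neg.2 (logOdds_strictMonoOn hc hd (by linarith)))

/-- In the log-odds coordinate `logOdds` this is the affine map `u ↦ β * u - γ`. -/
def knotMap (β γ z : ℝ) : ℝ := z ^ β / (z ^ β + exp γ * (1 - z) ^ β)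

lemma knotMap_denom_pos {β z : ℝ} (γ : ℝ) (hz : z ∈ Icc (0 : ℝ) 1) :
    0 < z ^ β + exp γ * (1 - z) ^ β := by
  have h1 : 0 ≤ z ^ β := rpow_nonneg hz.1 β
  have h2 : 0 ≤ (1 - z) ^ β := rpow_nonneg (sub_nonneg.2 hz.2) β
  rcases hz.1.eq_or_lt with rfl | hz0
  · simpa using add_pos_of_nonneg_of_pos h1 (exp_pos γ)
  · nlinarith [rpow_pos_of_pos hz0 β, exp_pos γ]

lemma knotMap_zero {β : ℝ} (γ : ℝ) (hβ : 0 < β) : knotMap β γ 0 = 0 := by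
  simp [knotMap, zero_rpow hβ.ne']

lemma knotMap_one {β : ℝ} (γ : ℝ) (hβ : 0 < β) : knotMap β γ 1 = 1 := by
  simp [knotMap, zero_rpow hβ.ne']

lemma knotMap_one_zero (z : ℝ) : knotMap 1 0 z = z := by
  simp [knotMap]

lemma knotMap_strictMonoOn {β : ℝ} (γ : ℝ) (hβ : 0 < β) :
    StrictMonoOn (knotMap β γ) (Icc 0 1) := by
  intro a ha b hb hab
  rw [knotMap, knotMap, div_lt_div_iff₀ (knotMap_denom_pos γ ha) (knotMap_denom_pos γ hb)]
  have key : (a * (1 - b)) ^ β < (b * (1 - a)) ^ β :=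
    rpow_lt_rpow (mul_nonneg ha.1 (sub_nonneg.2 hb.2)) (by nlinarith) hβ
  rw [mul_rpow ha.1 (sub_nonneg.2 hb.2), mul_rpow hb.1 (sub_nonneg.2 ha.2)] at key
  nlinarith [exp_pos γ]

lemma knotMap_eq {β γ A B : ℝ} (hA : A ∈ Ioo (0 : ℝ) 1) (hB : B ∈ Ioo (0 : ℝ) 1)
    (h : γ = β * logOdds A - logOdds B) : knotMap β γ A = B := by
  have hA' : 0 < 1 - A := sub_pos.2 hA.2
  have hB' : 0 < 1 - B := sub_pos.2 hB.2
  have hexp : exp γ = A ^ β / (1 - A) ^ β * ((1 - B) / B) := by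
    rw [h, logOdds, logOdds, exp_sub, mul_comm, ← rpow_def_of_pos (div_pos hA.1 hA'),
      exp_log (div_pos hB.1 hB'), div_rpow hA.1.le hA'.le]
    field_simp
  have hpos : 0 < A ^ β := rpow_pos_of_pos hA.1 β
  have hpos' : 0 < (1 - A) ^ β := rpow_pos_of_pos hA' β
  have hB0 : B ≠ 0 := hB.1.ne'
  have hden : A ^ β + exp γ * (1 - A) ^ β = A ^ β / B := by
    rw [hexp]
    field_simp
    ring
  rw [knotMap, hden, div_div_cancel₀ hpos.ne']

lemma ContinuousOn.knotMap {X : Type*} [TopologicalSpace X] {β γ : X → ℝ} {s : Set X}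
    (hβ : ContinuousOn β s) (hγ : ContinuousOn γ s) (hβ0 : ∀ x ∈ s, 0 < β x) :
    ContinuousOn (fun p : X × I => knotMap (β p.1) (γ p.1) p.2) (s ×ˢ univ) := by
  have hβ' : ContinuousOn (fun p : X × I => β p.1) (s ×ˢ univ) :=
    hβ.comp continuousOn_fst fun p hp => hp.1
  have hγ' : ContinuousOn (fun p : X × I => γ p.1) (s ×ˢ univ) :=
    hγ.comp continuousOn_fst fun p hp => hp.1
  have hpow : ∀ f : X × I → ℝ, Continuous f →
      ContinuousOn (fun p : X × I => f p ^ β p.1) (s ×ˢ univ) := fun f hf =>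
    hf.continuousOn.rpow hβ' fun p hp => Or.inr (hβ0 p.1 hp.1)
  have hz : Continuous fun p : X × I => (p.2 : ℝ) := by fun_prop
  refine (hpow _ hz).div ((hpow _ hz).add ((hγ'.rexp).mul (hpow _ (continuous_const.sub hz))))
    fun p _ => (knotMap_denom_pos _ p.2.2).ne'

lemma convex_setOf_strictMono_and_eq {α : Type*} [TopologicalSpace α] [Preorder α]
    (R : α → ℝ → Prop) :
    Convex ℝ {φ : C(α, ℝ) | StrictMono φ ∧ ∀ z v, R z v → φ z = v} := by
  rintro φ ⟨hφ, hφR⟩ ψ ⟨hψ, hψR⟩ a b ha hb hab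
  refine ⟨fun z z' hzz' => ?_, fun z v hzv => ?_⟩
  · have h1 := hφ hzz'
    have h2 := hψ hzz'
    simp only [ContinuousMap.add_apply, ContinuousMap.smul_apply, smul_eq_mul]
    rcases ha.eq_or_lt with rfl | ha'
    · rw [zero_add] at hab
      subst hab
      simpa using h2
    · nlinarith
  · simp [hφR z v hzv, hψR z v hzv, ← add_mul, hab]

lemma ContinuousOn.exists_continuousMap {X Y Z : Type*} [TopologicalSpace X]
    [TopologicalSpace Y] [TopologicalSpace Z] [Nonempty Z] {f : X → Y → Z} {s : Set X}
    (hf : ContinuousOn (Function.uncurry f) (s ×ˢ univ)) :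
    ∃ F : X → C(Y, Z), ContinuousOn F s ∧ ∀ x ∈ s, ⇑(F x) = f x := by
  classical
  have hcont : ∀ x ∈ s, Continuous (f x) := fun x hx =>
    continuousOn_univ.1 <| hf.comp (continuousOn_const.prodMk continuousOn_id)
      fun y _ => ⟨hx, mem_univ y⟩
  let F : X → C(Y, Z) := fun x =>
    if hx : x ∈ s then ⟨f x, hcont x hx⟩ else ContinuousMap.const Y (Classical.arbitrary Z)
  have hF : ∀ x ∈ s, ⇑(F x) = f x := fun x hx => by simp [F, hx]
  refine ⟨F, ContinuousMap.continuousOn_of_continuousOn_uncurry F ?_, hF⟩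
  exact hf.congr fun p hp => congrFun (hF p.1 hp.1) p.2

lemma mul_pos_of_forall_ne_zero {X : Type*} [TopologicalSpace X] [PreconnectedSpace X]
    {f : X → ℝ} (hf : Continuous f) (hne : ∀ x, f x ≠ 0) (a b : X) : 0 < f a * f b := by
  rcases (hne a).lt_or_gt with ha | ha <;> rcases (hne b).lt_or_gt with hb | hb
  · exact mul_pos_of_neg_of_neg ha hb
  · obtain ⟨c, hc⟩ := intermediate_value_univ a b hf ⟨ha.le, hb.le⟩
    exact absurd hc (hne c)
  · obtain ⟨c, hc⟩ := intermediate_value_univ b a hf ⟨hb.le, ha.le⟩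
    exact absurd hc (hne c)
  · exact mul_pos ha hb

lemma lerp_lt_lerp {a b c d : ℝ} (t : I) (hab : a < b) (hcd : c < d) :
    (1 - t) * a + t * c < (1 - t) * b + t * d := by
  rcases t.2.1.eq_or_lt with ht | ht
  · simpa [← ht] using hab
  · nlinarith [t.2.2]

lemma lerp_ne_lerp {a b c d : ℝ} (t : I) (hab : a ≠ b) (hcd : c ≠ d) (h : a < b ↔ c < d) :
    (1 - t) * a + t * c ≠ (1 - t) * b + t * d := by
  rcases hab.lt_or_gt with hab | hab
  · exact (lerp_lt_lerp t hab (h.1 hab)).ne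
  · have hdc : d < c := (not_lt.1 fun hcd' => lt_asymm hab (h.2 hcd')).lt_of_ne hcd.symm
    exact (lerp_lt_lerp t hab hdc).ne'

lemma lerp_mem_Ioo {a b : ℝ} (t : I) (ha : a ∈ Ioo (0 : ℝ) 1) (hb : b ∈ Ioo (0 : ℝ) 1) :
    (1 - t) * a + t * b ∈ Ioo (0 : ℝ) 1 := by
  simpa only [smul_eq_mul] using
    convex_Ioo (0 : ℝ) 1 ha hb (sub_nonneg.2 t.2.2) t.2.1 (sub_add_cancel 1 (t : ℝ))

lemma bijective_projIcc_comp {φ : C(I, ℝ)} (hφ : StrictMono φ) (h0 : φ 0 = 0) (h1 : φ 1 = 1) :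
    Function.Bijective fun z => projIcc 0 1 zero_le_one (φ z) := by
  have hmem : ∀ z, φ z ∈ Icc (0 : ℝ) 1 := fun z =>
    ⟨h0 ▸ hφ.monotone z.2.1, h1 ▸ hφ.monotone z.2.2⟩
  refine ⟨fun z z' hzz' => hφ.injective ?_, fun y => ?_⟩
  · simpa [projIcc_of_mem _ (hmem z), projIcc_of_mem _ (hmem z')] using hzz'
  · obtain ⟨z, hz⟩ := intermediate_value_univ 0 1 φ.continuous (by rw [h0, h1]; exact y.2)
    exact ⟨z, by simp [hz]⟩

def heightGraph (S : Set (S1 × S1)) (H : S1 × S1 → ℝ) : Set Thick :=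
  {q | (p1 q, p2 q) ∈ S ∧ p3 q = H (p1 q, p2 q)}

-- `projIcc` is harmless: below, each `Φ w` maps `I` onto `I`.
def fiberMap (Φ : C(S1 × S1 × I, C(I, ℝ))) (t : I) (q : Thick) : Thick :=
  (q.1, q.2.1, projIcc 0 1 zero_le_one (Φ (q.1, q.2.1, t) q.2.2))

section FiberMap

variable {Φ : C(S1 × S1 × I, C(I, ℝ))}

lemma continuous_fiberMap : Continuous fun qt : Thick × I => fiberMap Φ qt.2 qt.1 := by
  unfold fiberMap
  fun_prop

lemma isAmbientIsotopy_fiberMap (hmono : ∀ w, StrictMono (Φ w)) (h0 : ∀ w, Φ w 0 = 0)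
    (h1 : ∀ w, Φ w 1 = 1) (hid : ∀ x y z, Φ (x, y, 0) z = z) (L : Set Thick) :
    IsAmbientIsotopy (fun qt => fiberMap Φ qt.2 qt.1) L (fiberMap Φ 1 '' L) := by
  refine ⟨continuous_fiberMap, fun t => ?_, fun q => ?_, rfl⟩
  · refine isHomeomorph_iff_continuous_bijective.2
      ⟨continuous_fiberMap.comp (by fun_prop), ?_⟩
    have hfib := fun x y => bijective_projIcc_comp (hmono (x, y, t)) (h0 _) (h1 _)
    refine ⟨fun q q' hqq' => ?_, fun q => ?_⟩
    · simp only [fiberMap, Prod.mk.injEq] at hqq'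
      obtain ⟨hx, hy, hz⟩ := hqq'
      rw [hx, hy] at hz
      exact Prod.ext hx (Prod.ext hy ((hfib _ _).1 hz))
    · obtain ⟨z, hz⟩ := (hfib q.1 q.2.1).2 q.2.2
      exact ⟨(q.1, q.2.1, z), Prod.ext rfl (Prod.ext rfl hz)⟩
  · simp [fiberMap, hid]

lemma image_fiberMap_heightGraph {S : Set (S1 × S1)} {H H' : S1 × S1 → ℝ}
    (hH : ∀ p ∈ S, H p ∈ Icc (0 : ℝ) 1) (hH' : ∀ p ∈ S, H' p ∈ Icc (0 : ℝ) 1)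
    (hΦ : ∀ p ∈ S, ∀ z : I, (z : ℝ) = H p → Φ (p.1, p.2, 1) z = H' p) :
    fiberMap Φ 1 '' heightGraph S H = heightGraph S H' := by
  ext q
  simp only [heightGraph, p1, p2, p3, mem_image, mem_ofPred_eq]
  constructor
  · rintro ⟨q, ⟨hS, hq⟩, rfl⟩
    refine ⟨hS, ?_⟩
    simp [fiberMap, hΦ _ hS _ hq, projIcc_of_mem _ (hH' _ hS)]
  · rintro ⟨hS, hq⟩
    refine ⟨(q.1, q.2.1, ⟨H (q.1, q.2.1), hH _ hS⟩), ⟨hS, rfl⟩, Prod.ext rfl (Prod.ext rfl ?_)⟩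
    rw [fiberMap, hΦ _ hS ⟨H (q.1, q.2.1), hH _ hS⟩ rfl, projIcc_of_mem _ (hH' _ hS)]
    exact Subtype.ext hq.symm

end FiberMap

def warpGraph (x : S1) (h : S1 → ℝ) : Set Thick := heightGraph {p | p.1 = x} fun p => h p.2

def weftGraph (y : S1) (g : S1 → ℝ) : Set Thick := heightGraph {p | p.2 = y} fun p => g p.1

lemma range_eq_heightGraph {ι : S1 → Thick} {S : Set (S1 × S1)} {c : S1 × S1 → S1}
    (hc : InjOn c S) (hS : ∀ s, (p1 (ι s), p2 (ι s)) ∈ S)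
    (he : IsHomeomorph fun s => c (p1 (ι s), p2 (ι s))) :
    range ι = heightGraph S fun p => p3 (ι (he.homeomorph.symm (c p))) := by
  ext q
  constructor
  · rintro ⟨s, rfl⟩
    exact ⟨hS s, congrArg (p3 ∘ ι) (he.homeomorph.symm_apply_apply s).symm⟩
  · rintro ⟨hqS, hq⟩
    set s := he.homeomorph.symm (c (p1 q, p2 q))
    have hcs : c (p1 (ι s), p2 (ι s)) = c (p1 q, p2 q) := he.homeomorph.apply_symm_apply _
    obtain ⟨h1, h2⟩ := Prod.mk.inj (hc (hS s) hqS hcs)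
    exact ⟨s, Prod.ext h1 (Prod.ext h2 (Subtype.ext hq.symm))⟩

lemma IsWarp.exists_eq_warpGraph {K : Set Thick} (hK : IsWarp K) {x : S1}
    (hx : ∀ q ∈ K, p1 q = x) :
    ∃ h : S1 → ℝ, Continuous h ∧ (∀ y, h y ∈ Ioo (0 : ℝ) 1) ∧ K = warpGraph x h := by
  obtain ⟨ι, hι, rfl, hIoo, -, he⟩ := hK
  have hc : InjOn Prod.snd {p : S1 × S1 | p.1 = x} := fun p hp p' hp' hpp' =>
    Prod.ext (hp.trans hp'.symm) hpp'
  refine ⟨fun y => p3 (ι (he.homeomorph.symm y)), ?_, fun y => hIoo _,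
    range_eq_heightGraph (c := Prod.snd) hc (fun s => hx _ (mem_range_self s)) he⟩
  have := hι.continuous
  unfold p3
  fun_prop

lemma IsWeft.exists_eq_weftGraph {K : Set Thick} (hK : IsWeft K) {y : S1}
    (hy : ∀ q ∈ K, p2 q = y) :
    ∃ g : S1 → ℝ, Continuous g ∧ (∀ x, g x ∈ Ioo (0 : ℝ) 1) ∧ K = weftGraph y g := by
  obtain ⟨ι, hι, rfl, hIoo, -, he⟩ := hK
  have hc : InjOn Prod.fst {p : S1 × S1 | p.2 = y} := fun p hp p' hp' hpp' =>
    Prod.ext hpp' (hp.trans hp'.symm)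
  refine ⟨fun x => p3 (ι (he.homeomorph.symm x)), ?_, fun x => hIoo _,
    range_eq_heightGraph (c := Prod.fst) hc (fun s => hy _ (mem_range_self s)) he⟩
  have := hι.continuous
  unfold p3
  fun_prop

section Crossing

variable {x y : S1} {h g : S1 → ℝ}

lemma mk_mem_warpGraph (hh : h y ∈ Icc (0 : ℝ) 1) : (x, y, ⟨h y, hh⟩) ∈ warpGraph x h :=
  ⟨rfl, rfl⟩

lemma mk_mem_weftGraph (hg : g x ∈ Icc (0 : ℝ) 1) : (x, y, ⟨g x, hg⟩) ∈ weftGraph y g :=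
  ⟨rfl, rfl⟩

lemma above_warpGraph_weftGraph (hh : h y ∈ Icc (0 : ℝ) 1) (hg : g x ∈ Icc (0 : ℝ) 1) :
    Above (warpGraph x h) (weftGraph y g) ↔ g x < h y := by
  constructor
  · rintro ⟨q, ⟨hqx, hqz⟩, q', ⟨hq'y, hq'z⟩, h1, h2, h3⟩
    simp only [p1, p2, p3, mem_ofPred_eq] at hqx hqz hq'y hq'z h1 h2 h3
    rwa [← hqx, ← h1, ← hq'y, ← h2, ← hq'z, ← hqz]
  · exact fun hgh => ⟨_, mk_mem_warpGraph hh, _, mk_mem_weftGraph hg, rfl, rfl, hgh⟩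

lemma Disjoint.ne_of_warpGraph_weftGraph (hd : Disjoint (warpGraph x h) (weftGraph y g))
    (hh : h y ∈ Icc (0 : ℝ) 1) : g x ≠ h y := fun hgh =>
  disjoint_left.1 hd (mk_mem_warpGraph hh) ⟨rfl, hgh.symm⟩

end Crossing

/-- `warpHeight i (y, t)` is the height at time `t` of the `i`-th warp over `(warpPos i, y)`. -/
structure WeaveMotion (m n : ℕ) where
  warpPos : Fin m → S1
  weftPos : Fin n → S1
  warpHeight : Fin m → S1 × I → ℝ
  weftHeight : Fin n → S1 × I → ℝ
  warpPos_injective : Function.Injective warpPos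
  weftPos_injective : Function.Injective weftPos
  continuous_warpHeight : ∀ i, Continuous (warpHeight i)
  continuous_weftHeight : ∀ j, Continuous (weftHeight j)
  warpHeight_mem : ∀ i p, warpHeight i p ∈ Ioo (0 : ℝ) 1
  weftHeight_mem : ∀ j p, weftHeight j p ∈ Ioo (0 : ℝ) 1
  weftHeight_ne_warpHeight : ∀ i j t, weftHeight j (warpPos i, t) ≠ warpHeight i (weftPos j, t)

namespace WeaveMotion

variable {m n : ℕ} (M : WeaveMotion m n)

def link (t : I) : Set Thick :=
  (⋃ i, warpGraph (M.warpPos i) fun y => M.warpHeight i (y, t)) ∪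
    ⋃ j, weftGraph (M.weftPos j) fun x => M.weftHeight j (x, t)

/-- For `w = (x, y, t)`, the fibre map over `(x, y)` at time `t` must send `z` to `v`. -/
def IsKnot (w : S1 × S1 × I) (z : I) (v : ℝ) : Prop :=
  (z = 0 ∧ v = 0) ∨ (z = 1 ∧ v = 1) ∨ (w.2.2 = 0 ∧ v = z) ∨
    (∃ i, w.1 = M.warpPos i ∧ (z : ℝ) = M.warpHeight i (w.2.1, 0) ∧
      v = M.warpHeight i (w.2.1, w.2.2)) ∨
    (∃ j, w.2.1 = M.weftPos j ∧ (z : ℝ) = M.weftHeight j (w.1, 0) ∧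
      v = M.weftHeight j (w.1, w.2.2))

def admissible (w : S1 × S1 × I) : Set C(I, ℝ) :=
  {φ | StrictMono φ ∧ ∀ z v, M.IsKnot w z v → φ z = v}

def KnotParams (w : S1 × S1 × I) (β γ : ℝ) : Prop :=
  0 < β ∧ (w.2.2 = 0 → β = 1 ∧ γ = 0) ∧
    (∀ i, w.1 = M.warpPos i →
      γ = β * logOdds (M.warpHeight i (w.2.1, 0)) - logOdds (M.warpHeight i (w.2.1, w.2.2))) ∧
    (∀ j, w.2.1 = M.weftPos j →
      γ = β * logOdds (M.weftHeight j (w.1, 0)) - logOdds (M.weftHeight j (w.1, w.2.2)))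

lemma KnotParams.knotMap_eq {w : S1 × S1 × I} {β γ : ℝ} (hp : M.KnotParams w β γ) {z : I}
    {v : ℝ} (hk : M.IsKnot w z v) : knotMap β γ z = v := by
  obtain ⟨hβ, hid, hwarp, hweft⟩ := hp
  rcases hk with ⟨rfl, rfl⟩ | ⟨rfl, rfl⟩ | ⟨ht, rfl⟩ | ⟨i, hi, hz, rfl⟩ | ⟨j, hj, hz, rfl⟩
  · exact knotMap_zero γ hβ
  · exact knotMap_one γ hβ
  · obtain ⟨rfl, rfl⟩ := hid ht
    exact knotMap_one_zero z
  · rw [hz]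
    exact _root_.knotMap_eq (M.warpHeight_mem _ _) (M.warpHeight_mem _ _) (hwarp i hi)
  · rw [hz]
    exact _root_.knotMap_eq (M.weftHeight_mem _ _) (M.weftHeight_mem _ _) (hweft j hj)

lemma eventually_lines_through_subset (w : S1 × S1 × I) :
    ∀ᶠ w' in 𝓝 w, (∀ i, w'.1 = M.warpPos i → w.1 = M.warpPos i) ∧
      ∀ j, w'.2.1 = M.weftPos j → w.2.1 = M.weftPos j := by
  refine (Filter.eventually_all.2 fun i => ?_).and (Filter.eventually_all.2 fun j => ?_)
  · by_cases hi : w.1 = M.warpPos i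
    · exact .of_forall fun _ _ => hi
    · exact (continuous_fst.continuousAt.eventually_ne hi).mono fun _ h h' => absurd h' h
  · by_cases hj : w.2.1 = M.weftPos j
    · exact .of_forall fun _ _ => hj
    · exact ((continuous_fst.comp continuous_snd).continuousAt.eventually_ne hj).mono
        fun _ h h' => absurd h' h

lemma exists_nhds_admissible_of_eventually {w : S1 × S1 × I} {β γ : S1 × S1 × I → ℝ}
    (h : ∀ᶠ w' in 𝓝 w, M.KnotParams w' (β w') (γ w') ∧ ContinuousAt β w' ∧ ContinuousAt γ w') :
    ∃ U ∈ 𝓝 w, ∃ φ : S1 × S1 × I → C(I, ℝ), ContinuousOn φ U ∧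
      ∀ w' ∈ U, φ w' ∈ M.admissible w' := by
  set U := {w' | M.KnotParams w' (β w') (γ w') ∧ ContinuousAt β w' ∧ ContinuousAt γ w'}
  obtain ⟨φ, hφ, hφU⟩ := ContinuousOn.exists_continuousMap
    (f := fun w' (z : I) => knotMap (β w') (γ w') z)
    (ContinuousOn.knotMap (s := U) (continuousOn_of_forall_continuousAt fun _ hw => hw.2.1)
      (continuousOn_of_forall_continuousAt fun _ hw => hw.2.2) fun _ hw => hw.1.1)
  refine ⟨_, h, φ, hφ, fun w' hw' => ⟨?_, fun z v hk => ?_⟩⟩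
  · rw [hφU w' hw']
    exact fun a b hab => knotMap_strictMonoOn _ hw'.1.1 a.2 b.2 hab
  · rw [hφU w' hw']
    exact hw'.1.knotMap_eq M hk

lemma continuous_logOdds_warpHeight (i : Fin m) {X : Type*} [TopologicalSpace X]
    {f : X → S1 × I} (hf : Continuous f) : Continuous fun x => logOdds (M.warpHeight i (f x)) :=
  ((M.continuous_warpHeight i).comp hf).logOdds fun _ => M.warpHeight_mem _ _

lemma continuous_logOdds_weftHeight (j : Fin n) {X : Type*} [TopologicalSpace X]
    {f : X → S1 × I} (hf : Continuous f) : Continuous fun x => logOdds (M.weftHeight j (f x)) :=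
  ((M.continuous_weftHeight j).comp hf).logOdds fun _ => M.weftHeight_mem _ _

lemma eventually_knotParams_of_off_lines {w : S1 × S1 × I} (hx : ∀ i, w.1 ≠ M.warpPos i)
    (hy : ∀ j, w.2.1 ≠ M.weftPos j) : ∀ᶠ w' in 𝓝 w, M.KnotParams w' 1 0 := by
  filter_upwards [M.eventually_lines_through_subset w] with w' ⟨hx', hy'⟩
  exact ⟨one_pos, fun _ => ⟨rfl, rfl⟩, fun i hi => absurd (hx' i hi) (hx i),
    fun j hj => absurd (hy' j hj) (hy j)⟩

lemma eventually_knotParams_of_warp {w : S1 × S1 × I} {i : Fin m} (hi : w.1 = M.warpPos i)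
    (hy : ∀ j, w.2.1 ≠ M.weftPos j) :
    ∀ᶠ w' in 𝓝 w, M.KnotParams w' 1
      (logOdds (M.warpHeight i (w'.2.1, 0)) - logOdds (M.warpHeight i (w'.2.1, w'.2.2))) := by
  filter_upwards [M.eventually_lines_through_subset w] with w' ⟨hx', hy'⟩
  refine ⟨one_pos, fun ht => ⟨rfl, by rw [ht, sub_self]⟩, fun i' hi' => ?_,
    fun j hj => absurd (hy' j hj) (hy j)⟩
  rw [M.warpPos_injective ((hx' i' hi').symm.trans hi), one_mul]

lemma eventually_knotParams_of_weft {w : S1 × S1 × I} {j : Fin n} (hj : w.2.1 = M.weftPos j)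
    (hx : ∀ i, w.1 ≠ M.warpPos i) :
    ∀ᶠ w' in 𝓝 w, M.KnotParams w' 1
      (logOdds (M.weftHeight j (w'.1, 0)) - logOdds (M.weftHeight j (w'.1, w'.2.2))) := by
  filter_upwards [M.eventually_lines_through_subset w] with w' ⟨hx', hy'⟩
  refine ⟨one_pos, fun ht => ⟨rfl, by rw [ht, sub_self]⟩,
    fun i hi => absurd (hx' i hi) (hx i), fun j' hj' => ?_⟩
  rw [M.weftPos_injective ((hy' j' hj').symm.trans hj), one_mul]

/-- The slope `β` for which one `knotMap β γ` matches both strands through a crossing. -/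
def crossingSlope (i : Fin m) (j : Fin n) (w : S1 × S1 × I) : ℝ :=
  (logOdds (M.warpHeight i (w.2.1, w.2.2)) - logOdds (M.weftHeight j (w.1, w.2.2))) /
    (logOdds (M.warpHeight i (w.2.1, 0)) - logOdds (M.weftHeight j (w.1, 0)))

lemma crossing_gap_mul_pos (i : Fin m) (j : Fin n) (t : I) :
    0 < (M.warpHeight i (M.weftPos j, t) - M.weftHeight j (M.warpPos i, t)) *
      (M.warpHeight i (M.weftPos j, 0) - M.weftHeight j (M.warpPos i, 0)) :=
  mul_pos_of_forall_ne_zero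
    (f := fun s => M.warpHeight i (M.weftPos j, s) - M.weftHeight j (M.warpPos i, s))
    (by have := M.continuous_warpHeight i; have := M.continuous_weftHeight j; fun_prop)
    (fun s => sub_ne_zero.2 (M.weftHeight_ne_warpHeight i j s).symm) t 0

lemma eventually_knotParams_of_crossing {w : S1 × S1 × I} {i : Fin m} {j : Fin n}
    (hi : w.1 = M.warpPos i) (hj : w.2.1 = M.weftPos j) :
    ∀ᶠ w' in 𝓝 w, M.KnotParams w' (M.crossingSlope i j w')
      (M.crossingSlope i j w' * logOdds (M.warpHeight i (w'.2.1, 0)) -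
        logOdds (M.warpHeight i (w'.2.1, w'.2.2))) := by
  have hcont : Continuous fun w' : S1 × S1 × I =>
      (M.warpHeight i (w'.2.1, w'.2.2) - M.weftHeight j (w'.1, w'.2.2)) *
        (M.warpHeight i (w'.2.1, 0) - M.weftHeight j (w'.1, 0)) := by
    have := M.continuous_warpHeight i; have := M.continuous_weftHeight j; fun_prop
  have hsign : ∀ᶠ w' in 𝓝 w,
      0 < (M.warpHeight i (w'.2.1, w'.2.2) - M.weftHeight j (w'.1, w'.2.2)) *
        (M.warpHeight i (w'.2.1, 0) - M.weftHeight j (w'.1, 0)) := by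
    refine continuousAt_const.eventually_lt hcont.continuousAt ?_
    obtain ⟨x, y, t⟩ := w
    simp only at hi hj
    subst hi hj
    exact M.crossing_gap_mul_pos i j t
  filter_upwards [M.eventually_lines_through_subset w, hsign] with w' ⟨hx', hy'⟩ hpos
  have hβ : 0 < M.crossingSlope i j w' := div_logOdds_sub_pos (M.warpHeight_mem _ _)
    (M.weftHeight_mem _ _) (M.warpHeight_mem _ _) (M.weftHeight_mem _ _) hpos
  have hden : logOdds (M.warpHeight i (w'.2.1, 0)) - logOdds (M.weftHeight j (w'.1, 0)) ≠ 0 :=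
    fun h0 => hβ.ne' (by rw [crossingSlope, h0, div_zero])
  refine ⟨hβ, fun ht => ?_, fun i' hi' => ?_, fun j' hj' => ?_⟩
  · have h1 : M.crossingSlope i j w' = 1 := by rw [crossingSlope, ht, div_self hden]
    rw [h1, ht, one_mul, sub_self]
    exact ⟨rfl, rfl⟩
  · rw [M.warpPos_injective ((hx' i' hi').symm.trans hi)]
  · obtain rfl := M.weftPos_injective ((hy' j' hj').symm.trans hj)
    rw [crossingSlope]
    field_simp
    ring

lemma continuousAt_crossingSlope {i : Fin m} {j : Fin n} {w : S1 × S1 × I}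
    (h : 0 < M.crossingSlope i j w) : ContinuousAt (M.crossingSlope i j) w := by
  refine ContinuousAt.div ?_ ?_ (fun h0 => h.ne' (by rw [crossingSlope, h0, div_zero])) <;>
    exact ((M.continuous_logOdds_warpHeight i (by fun_prop)).sub
      (M.continuous_logOdds_weftHeight j (by fun_prop))).continuousAt

lemma exists_nhds_admissible (w : S1 × S1 × I) :
    ∃ U ∈ 𝓝 w, ∃ φ : S1 × S1 × I → C(I, ℝ), ContinuousOn φ U ∧
      ∀ w' ∈ U, φ w' ∈ M.admissible w' := by
  have hwarp := fun i => M.continuous_logOdds_warpHeight i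
    (f := fun w' : S1 × S1 × I => (w'.2.1, 0)) (by fun_prop)
  have hwarp' := fun i => M.continuous_logOdds_warpHeight i
    (f := fun w' : S1 × S1 × I => w'.2) continuous_snd
  have hweft := fun j => M.continuous_logOdds_weftHeight j
    (f := fun w' : S1 × S1 × I => (w'.1, 0)) (by fun_prop)
  have hweft' := fun j => M.continuous_logOdds_weftHeight j
    (f := fun w' : S1 × S1 × I => (w'.1, w'.2.2)) (by fun_prop)
  by_cases hx : ∃ i, w.1 = M.warpPos i <;> by_cases hy : ∃ j, w.2.1 = M.weftPos j
  · obtain ⟨i, hi⟩ := hx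
    obtain ⟨j, hj⟩ := hy
    refine M.exists_nhds_admissible_of_eventually
      ((M.eventually_knotParams_of_crossing hi hj).mono fun w' hw' => ⟨hw', ?_, ?_⟩)
    · exact M.continuousAt_crossingSlope hw'.1
    · exact ((M.continuousAt_crossingSlope hw'.1).mul (hwarp i).continuousAt).sub
        (hwarp' i).continuousAt
  · obtain ⟨i, hi⟩ := hx
    exact M.exists_nhds_admissible_of_eventually
      ((M.eventually_knotParams_of_warp hi (not_exists.1 hy)).mono
      fun w' hw' => ⟨hw', continuousAt_const, ((hwarp i).sub (hwarp' i)).continuousAt⟩)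
  · obtain ⟨j, hj⟩ := hy
    exact M.exists_nhds_admissible_of_eventually
      ((M.eventually_knotParams_of_weft hj (not_exists.1 hx)).mono
      fun w' hw' => ⟨hw', continuousAt_const, ((hweft j).sub (hweft' j)).continuousAt⟩)
  · exact M.exists_nhds_admissible_of_eventually
      ((M.eventually_knotParams_of_off_lines (not_exists.1 hx) (not_exists.1 hy)).mono
      fun w' hw' => ⟨hw', continuousAt_const, continuousAt_const⟩)

lemma image_fiberMap_link {Φ : C(S1 × S1 × I, C(I, ℝ))}
    (hΦ : ∀ w z v, M.IsKnot w z v → Φ w z = v) : fiberMap Φ 1 '' M.link 0 = M.link 1 := by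
  simp only [link, image_union, image_iUnion]
  congr 1
  · refine iUnion_congr fun i => image_fiberMap_heightGraph
      (fun _ _ => Ioo_subset_Icc_self (M.warpHeight_mem _ _))
      (fun _ _ => Ioo_subset_Icc_self (M.warpHeight_mem _ _)) fun p hp z hz => ?_
    exact hΦ _ _ _ (.inr (.inr (.inr (.inl ⟨i, hp, hz, rfl⟩))))
  · refine iUnion_congr fun j => image_fiberMap_heightGraph
      (fun _ _ => Ioo_subset_Icc_self (M.weftHeight_mem _ _))
      (fun _ _ => Ioo_subset_Icc_self (M.weftHeight_mem _ _)) fun p hp z hz => ?_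
    exact hΦ _ _ _ (.inr (.inr (.inr (.inr ⟨j, hp, hz, rfl⟩))))

theorem isotopic_link : Isotopic (M.link 0) (M.link 1) := by
  obtain ⟨Φ, hΦ⟩ := exists_continuous_forall_mem_convex_of_local
    (fun _ => convex_setOf_strictMono_and_eq _) M.exists_nhds_admissible
  have hknot : ∀ w z v, M.IsKnot w z v → Φ w z = v := fun w => (hΦ w).2
  refine ⟨_, M.image_fiberMap_link hknot ▸ isAmbientIsotopy_fiberMap (fun w => (hΦ w).1)
    (fun w => hknot w 0 0 (.inl ⟨rfl, rfl⟩)) (fun w => hknot w 1 1 (.inr (.inl ⟨rfl, rfl⟩)))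
    (fun _ _ z => hknot _ z z (.inr (.inr (.inl ⟨rfl, rfl⟩)))) _⟩

end WeaveMotion

def stdCoord (k : ℕ) (i : Fin k) : S1 := (((2 * (i : ℕ) + 1 : ℝ) / (2 * (k : ℝ)) : ℝ) : S1)

lemma stdCoord_injective (k : ℕ) : Function.Injective (stdCoord k) := by
  intro i i' hii'
  have hk : (0 : ℝ) < k := by exact_mod_cast i.pos
  have hmem : ∀ i : Fin k, (2 * (i : ℕ) + 1 : ℝ) / (2 * k) ∈ Ico (0 : ℝ) (0 + 1) := fun i => by
    have : ((i : ℕ) : ℝ) + 1 ≤ k := by exact_mod_cast i.2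
    rw [zero_add, mem_Ico, div_lt_one (by positivity)]
    exact ⟨by positivity, by linarith⟩
  have h := (AddCircle.coe_eq_coe_iff_of_mem_Ico (hmem i) (hmem i')).1 hii'
  field_simp at h
  exact Fin.ext (by exact_mod_cast (by linarith : ((i : ℕ) : ℝ) = i'))

structure Weave.Heights {m n : ℕ} (W : Weave m n) where
  warpHeight : Fin m → S1 → ℝ
  weftHeight : Fin n → S1 → ℝ
  continuous_warpHeight : ∀ i, Continuous (warpHeight i)
  continuous_weftHeight : ∀ j, Continuous (weftHeight j)
  warpHeight_mem : ∀ i y, warpHeight i y ∈ Ioo (0 : ℝ) 1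
  weftHeight_mem : ∀ j x, weftHeight j x ∈ Ioo (0 : ℝ) 1
  warp_eq : ∀ i, W.warp i = warpGraph (stdCoord m i) (warpHeight i)
  weft_eq : ∀ j, W.weft j = weftGraph (stdCoord n j) (weftHeight j)

lemma StdPos.nonempty_heights {m n : ℕ} {W : Weave m n} (hW : StdPos W) : Nonempty W.Heights := by
  choose h hh hh_mem hh_eq using fun i => (W.warp_isWarp i).exists_eq_warpGraph (hW.1 i)
  choose g hg hg_mem hg_eq using fun j => (W.weft_isWeft j).exists_eq_weftGraph (hW.2 j)
  exact ⟨⟨h, g, hh, hg, hh_mem, hg_mem, hh_eq, hg_eq⟩⟩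

namespace Weave.Heights

variable {m n : ℕ} {W W₀ W₁ : Weave m n} (H : W.Heights)

lemma carrier_eq : W.carrier = (⋃ i, warpGraph (stdCoord m i) (H.warpHeight i)) ∪
    ⋃ j, weftGraph (stdCoord n j) (H.weftHeight j) := by
  simp only [Weave.carrier, H.warp_eq, H.weft_eq]

lemma above_iff (i : Fin m) (j : Fin n) : Above (W.warp i) (W.weft j) ↔
    H.weftHeight j (stdCoord m i) < H.warpHeight i (stdCoord n j) := by
  rw [H.warp_eq, H.weft_eq]
  exact above_warpGraph_weftGraph (Ioo_subset_Icc_self (H.warpHeight_mem _ _))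
    (Ioo_subset_Icc_self (H.weftHeight_mem _ _))

lemma weftHeight_ne_warpHeight (i : Fin m) (j : Fin n) :
    H.weftHeight j (stdCoord m i) ≠ H.warpHeight i (stdCoord n j) := by
  have hd : Disjoint (W.warp i) (W.weft j) := W.disj (Sum.inl_ne_inr (a := i) (b := j))
  rw [H.warp_eq, H.weft_eq] at hd
  exact hd.ne_of_warpGraph_weftGraph (Ioo_subset_Icc_self (H.warpHeight_mem _ _))

def lerpMotion (H₀ : W₀.Heights) (H₁ : W₁.Heights)
    (hsame : ∀ i j, Above (W₀.warp i) (W₀.weft j) ↔ Above (W₁.warp i) (W₁.weft j)) :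
    WeaveMotion m n where
  warpPos := stdCoord m
  weftPos := stdCoord n
  warpHeight i p := (1 - p.2) * H₀.warpHeight i p.1 + p.2 * H₁.warpHeight i p.1
  weftHeight j p := (1 - p.2) * H₀.weftHeight j p.1 + p.2 * H₁.weftHeight j p.1
  warpPos_injective := stdCoord_injective m
  weftPos_injective := stdCoord_injective n
  continuous_warpHeight i := by
    have := H₀.continuous_warpHeight i; have := H₁.continuous_warpHeight i; fun_prop
  continuous_weftHeight j := by
    have := H₀.continuous_weftHeight j; have := H₁.continuous_weftHeight j; fun_prop
  warpHeight_mem i p := lerp_mem_Ioo p.2 (H₀.warpHeight_mem i p.1) (H₁.warpHeight_mem i p.1)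
  weftHeight_mem j p := lerp_mem_Ioo p.2 (H₀.weftHeight_mem j p.1) (H₁.weftHeight_mem j p.1)
  weftHeight_ne_warpHeight i j t := lerp_ne_lerp t (H₀.weftHeight_ne_warpHeight i j)
    (H₁.weftHeight_ne_warpHeight i j)
    ((H₀.above_iff i j).symm.trans ((hsame i j).trans (H₁.above_iff i j)))

variable (H₀ : W₀.Heights) (H₁ : W₁.Heights)
  (hsame : ∀ i j, Above (W₀.warp i) (W₀.weft j) ↔ Above (W₁.warp i) (W₁.weft j))

lemma lerpMotion_link_zero : (H₀.lerpMotion H₁ hsame).link 0 = W₀.carrier := by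
  simp [WeaveMotion.link, lerpMotion, H₀.carrier_eq]

lemma lerpMotion_link_one : (H₀.lerpMotion H₁ hsame).link 1 = W₁.carrier := by
  simp [WeaveMotion.link, lerpMotion, H₁.carrier_eq]

end Weave.Heights

/-- Two `m × n`-weaves in standard position with the same weaving
diagram are isotopic links in `T² × I`. -/
theorem isotopic_of_same_diagram {m n : ℕ} (W0 W1 : Weave m n)
    (h0 : StdPos W0) (h1 : StdPos W1)
    (h : ∀ (i : Fin m) (j : Fin n),
      Above (W0.warp i) (W0.weft j) ↔ Above (W1.warp i) (W1.weft j)) :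
    Isotopic W0.carrier W1.carrier := by
  obtain ⟨H₀⟩ := h0.nonempty_heights
  obtain ⟨H₁⟩ := h1.nonempty_heights
  rw [← H₀.lerpMotion_link_zero H₁ h, ← H₀.lerpMotion_link_one H₁ h]
  exact (H₀.lerpMotion H₁ h).isotopic_link
end
end

section
/- For m, n ≥ 2, let N_nc(m, n) be the number of functions c : ℤ/m × ℤ/n → {0,1} such that for every i ∈ ℤ/m the functions c(i, ·) and c(i+1, ·) are not comparable, and for every j ∈ ℤ/n the functions c(·, j) and c(·, j+1) are not comparable. Then N_nc(m, n) ≥ 2^{mn} − 2m · 2^{(m−2)n} · 3^n − 2n · 2^{m(n−2)} · 3^m. -/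
/-- Two `{0,1}`-valued functions are comparable if one is pointwise ≤ the other. -/
def BoolComparable {α : Type*} (f g : α → Bool) : Prop :=
  (∀ a, f a ≤ g a) ∨ (∀ a, g a ≤ f a)

lemma aux_row {α β : Type*} [Fintype α] [Fintype β] [DecidableEq α] [DecidableEq β] {i i' : α} (hne : i ≠ i') :
    (Finset.univ.filter (fun c : α × β → Bool => ∀ j, c (i, j) ≤ c (i', j))).card ≤
      3 ^ Fintype.card β * 2 ^ ((Fintype.card α - 2) * Fintype.card β) := by
  classical
  set T := (β → {p : Bool × Bool // p.1 ≤ p.2}) × ({k : α // k ≠ i ∧ k ≠ i'} → β → Bool) with hT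
  have hcardsub : Fintype.card {k : α // k ≠ i ∧ k ≠ i'} = Fintype.card α - 2 := by
    rw [Fintype.card_subtype]
    have h1 : Finset.univ.filter (fun k : α => k ≠ i ∧ k ≠ i') = Finset.univ \ {i, i'} := by
      ext k; simp [and_comm]
    rw [h1, Finset.card_sdiff_of_subset (by simp)]
    simp [Finset.card_insert_of_notMem, hne, Finset.card_univ]
  have hcardT : Fintype.card T = 3 ^ Fintype.card β * 2 ^ ((Fintype.card α - 2) * Fintype.card β) := by
    have h3 : Fintype.card {p : Bool × Bool // p.1 ≤ p.2} = 3 := by decide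
    simp [hT, Fintype.card_fun, h3, hcardsub, pow_mul, pow_right_comm]
  rw [← hcardT, ← Fintype.card_subtype]
  apply Fintype.card_le_of_injective
    (fun c : {c : α × β → Bool // ∀ j, c (i, j) ≤ c (i', j)} =>
      ((fun j => ⟨(c.1 (i, j), c.1 (i', j)), c.2 j⟩,
        fun k j => c.1 (k.1, j)) : T))
  intro c₁ c₂ h
  have h1 := congrArg Prod.fst h
  have h2 := congrArg Prod.snd h
  apply Subtype.ext
  funext p
  obtain ⟨k, j⟩ := p
  by_cases hk : k = i
  · subst hk
    have := congrArg (fun f => ((f j : {p : Bool × Bool // p.1 ≤ p.2}) : Bool × Bool).1) h1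
    simpa using this
  by_cases hk' : k = i'
  · subst hk'
    have := congrArg (fun f => ((f j : {p : Bool × Bool // p.1 ≤ p.2}) : Bool × Bool).2) h1
    simpa using this
  · have := congrArg (fun f => f (⟨k, hk, hk'⟩ : {k : α // k ≠ i ∧ k ≠ i'}) j) h2
    simpa using this

lemma aux_col {α β : Type*} [Fintype α] [Fintype β] [DecidableEq α] [DecidableEq β]
    {j j' : β} (hne : j ≠ j') :
    (Finset.univ.filter (fun c : α × β → Bool => ∀ a, c (a, j) ≤ c (a, j'))).card ≤
      3 ^ Fintype.card α * 2 ^ ((Fintype.card β - 2) * Fintype.card α) := by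
  classical
  have e : {c : α × β → Bool // ∀ a, c (a, j) ≤ c (a, j')} ≃
      {c : β × α → Bool // ∀ a, c (j, a) ≤ c (j', a)} :=
    ⟨fun c => ⟨fun p => c.1 (p.2, p.1), fun a => c.2 a⟩,
     fun c => ⟨fun p => c.1 (p.2, p.1), fun a => c.2 a⟩,
     fun c => rfl, fun c => rfl⟩
  rw [← Fintype.card_subtype, Fintype.card_congr e, Fintype.card_subtype]
  exact aux_row hne

/-- For `m, n ≥ 2`, the number of crossing functions
`c : ℤ/m × ℤ/n → {0,1}` in which no two cyclically adjacent warps and no two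
cyclically adjacent wefts are comparable is at least
`2^{mn} − 2m·2^{(m−2)n}·3^n − 2n·2^{m(n−2)}·3^m`. -/
theorem card_noncomparable_ge (m n : ℕ) (hm : 2 ≤ m) (hn : 2 ≤ n) :
    (2 : ℤ) ^ (m * n) - 2 * m * 2 ^ ((m - 2) * n) * 3 ^ n
        - 2 * n * 2 ^ (m * (n - 2)) * 3 ^ m ≤
      (Nat.card {c : ZMod m × ZMod n → Bool //
        (∀ i : ZMod m, ¬ BoolComparable (fun j => c (i, j)) (fun j => c (i + 1, j))) ∧
        (∀ j : ZMod n, ¬ BoolComparable (fun i => c (i, j)) (fun i => c (i, j + 1)))} : ℤ) := by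
  classical
  haveI : NeZero m := ⟨by omega⟩
  haveI : NeZero n := ⟨by omega⟩
  haveI : Fact (1 < m) := ⟨by omega⟩
  haveI : Fact (1 < n) := ⟨by omega⟩
  have hm1 : ∀ i : ZMod m, i ≠ i + 1 := by
    intro i h
    exact one_ne_zero (left_eq_add.mp h)
  have hn1 : ∀ j : ZMod n, j ≠ j + 1 := by
    intro j h
    exact one_ne_zero (left_eq_add.mp h)
  set P : (ZMod m × ZMod n → Bool) → Prop := fun c =>
      (∀ i : ZMod m, ¬ BoolComparable (fun j => c (i, j)) (fun j => c (i + 1, j))) ∧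
      (∀ j : ZMod n, ¬ BoolComparable (fun i => c (i, j)) (fun i => c (i, j + 1))) with hP
  have hcardfun : Fintype.card (ZMod m × ZMod n → Bool) = 2 ^ (m * n) := by
    simp [Fintype.card_fun, ZMod.card]
  -- good + bad = total
  have hsplit := Finset.card_filter_add_card_filter_not (s := Finset.univ) (p := P)
  rw [Finset.card_univ, hcardfun] at hsplit
  -- bad count bound
  have hbadsub : Finset.univ.filter (fun c => ¬ P c) ⊆
      (Finset.univ.biUnion fun i : ZMod m => Finset.univ.filter
        (fun c : ZMod m × ZMod n → Bool =>
          BoolComparable (fun j => c (i, j)) (fun j => c (i + 1, j)))) ∪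
      (Finset.univ.biUnion fun j : ZMod n => Finset.univ.filter
        (fun c : ZMod m × ZMod n → Bool =>
          BoolComparable (fun i => c (i, j)) (fun i => c (i, j + 1)))) := by
    intro c hc
    simp only [Finset.mem_filter, Finset.mem_univ, true_and, hP, not_and_or, not_forall,
      not_not] at hc
    simp only [Finset.mem_union, Finset.mem_biUnion, Finset.mem_filter, Finset.mem_univ,
      true_and]
    rcases hc with ⟨i, hi⟩ | ⟨j, hj⟩
    · exact Or.inl ⟨i, hi⟩
    · exact Or.inr ⟨j, hj⟩
  have hrow : ∀ i : ZMod m,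
      (Finset.univ.filter (fun c : ZMod m × ZMod n → Bool =>
        BoolComparable (fun j => c (i, j)) (fun j => c (i + 1, j)))).card ≤
      2 * (3 ^ n * 2 ^ ((m - 2) * n)) := by
    intro i
    have hsub : Finset.univ.filter (fun c : ZMod m × ZMod n → Bool =>
        BoolComparable (fun j => c (i, j)) (fun j => c (i + 1, j))) ⊆
        (Finset.univ.filter (fun c : ZMod m × ZMod n → Bool => ∀ j, c (i, j) ≤ c (i + 1, j))) ∪
        (Finset.univ.filter (fun c : ZMod m × ZMod n → Bool => ∀ j, c (i + 1, j) ≤ c (i, j))) := by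
      intro c hc
      simp only [Finset.mem_filter, Finset.mem_univ, true_and, Finset.mem_union] at hc ⊢
      exact hc
    calc _ ≤ _ := Finset.card_le_card hsub
      _ ≤ _ + _ := Finset.card_union_le _ _
      _ ≤ 3 ^ Fintype.card (ZMod n) * 2 ^ ((Fintype.card (ZMod m) - 2) * Fintype.card (ZMod n))
          + 3 ^ Fintype.card (ZMod n) * 2 ^ ((Fintype.card (ZMod m) - 2) * Fintype.card (ZMod n)) :=
        Nat.add_le_add (aux_row (hm1 i)) (aux_row (Ne.symm (hm1 i)))
      _ = 2 * (3 ^ n * 2 ^ ((m - 2) * n)) := by rw [ZMod.card, ZMod.card]; ring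
  have hcol : ∀ j : ZMod n,
      (Finset.univ.filter (fun c : ZMod m × ZMod n → Bool =>
        BoolComparable (fun i => c (i, j)) (fun i => c (i, j + 1)))).card ≤
      2 * (3 ^ m * 2 ^ ((n - 2) * m)) := by
    intro j
    have hsub : Finset.univ.filter (fun c : ZMod m × ZMod n → Bool =>
        BoolComparable (fun i => c (i, j)) (fun i => c (i, j + 1))) ⊆
        (Finset.univ.filter (fun c : ZMod m × ZMod n → Bool => ∀ a, c (a, j) ≤ c (a, j + 1))) ∪
        (Finset.univ.filter (fun c : ZMod m × ZMod n → Bool => ∀ a, c (a, j + 1) ≤ c (a, j))) := by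
      intro c hc
      simp only [Finset.mem_filter, Finset.mem_univ, true_and, Finset.mem_union] at hc ⊢
      exact hc
    calc _ ≤ _ := Finset.card_le_card hsub
      _ ≤ _ + _ := Finset.card_union_le _ _
      _ ≤ 3 ^ Fintype.card (ZMod m) * 2 ^ ((Fintype.card (ZMod n) - 2) * Fintype.card (ZMod m))
          + 3 ^ Fintype.card (ZMod m) * 2 ^ ((Fintype.card (ZMod n) - 2) * Fintype.card (ZMod m)) :=
        Nat.add_le_add (aux_col (hn1 j)) (aux_col (Ne.symm (hn1 j)))
      _ = 2 * (3 ^ m * 2 ^ ((n - 2) * m)) := by rw [ZMod.card, ZMod.card]; ring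
  have hbad : (Finset.univ.filter (fun c => ¬ P c)).card ≤
      m * (2 * (3 ^ n * 2 ^ ((m - 2) * n))) + n * (2 * (3 ^ m * 2 ^ ((n - 2) * m))) := by
    calc (Finset.univ.filter (fun c => ¬ P c)).card
        ≤ _ := Finset.card_le_card hbadsub
      _ ≤ _ + _ := Finset.card_union_le _ _
      _ ≤ m * (2 * (3 ^ n * 2 ^ ((m - 2) * n))) + n * (2 * (3 ^ m * 2 ^ ((n - 2) * m))) := by
        apply Nat.add_le_add
        · calc _ ≤ ∑ i : ZMod m, (Finset.univ.filter (fun c : ZMod m × ZMod n → Bool =>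
                BoolComparable (fun j => c (i, j)) (fun j => c (i + 1, j)))).card :=
              Finset.card_biUnion_le
            _ ≤ ∑ _i : ZMod m, 2 * (3 ^ n * 2 ^ ((m - 2) * n)) :=
              Finset.sum_le_sum fun i _ => hrow i
            _ = m * (2 * (3 ^ n * 2 ^ ((m - 2) * n))) := by
              simp [Finset.sum_const, Finset.card_univ, ZMod.card, mul_comm]
        · calc _ ≤ ∑ j : ZMod n, (Finset.univ.filter (fun c : ZMod m × ZMod n → Bool =>
                BoolComparable (fun i => c (i, j)) (fun i => c (i, j + 1)))).card :=
              Finset.card_biUnion_le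
            _ ≤ ∑ _j : ZMod n, 2 * (3 ^ m * 2 ^ ((n - 2) * m)) :=
              Finset.sum_le_sum fun j _ => hcol j
            _ = n * (2 * (3 ^ m * 2 ^ ((n - 2) * m))) := by
              simp [Finset.sum_const, Finset.card_univ, ZMod.card, mul_comm]
  have hgood : Nat.card {c : ZMod m × ZMod n → Bool // P c} =
      (Finset.univ.filter P).card := by
    rw [Nat.card_eq_fintype_card, Fintype.card_subtype]
  show _ ≤ (Nat.card {c : ZMod m × ZMod n → Bool // P c} : ℤ)
  rw [hgood]
  have h1 : ((Finset.univ.filter P).card : ℤ)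
      = 2 ^ (m * n) - ((Finset.univ.filter (fun c => ¬ P c)).card : ℤ) := by
    have h0 : ((Finset.univ.filter P).card : ℤ)
        + ((Finset.univ.filter (fun c => ¬ P c)).card : ℤ) = 2 ^ (m * n) := by
      exact_mod_cast hsplit
    linarith
  rw [h1]
  have h2 : ((Finset.univ.filter (fun c => ¬ P c)).card : ℤ) ≤
      m * (2 * (3 ^ n * 2 ^ ((m - 2) * n))) + n * (2 * (3 ^ m * 2 ^ ((n - 2) * m))) := by
    exact_mod_cast hbad
  have hmm : (n - 2) * m = m * (n - 2) := Nat.mul_comm _ _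
  rw [hmm] at h2
  linarith
end

section
/- For n ≥ 2, let N_nc(n, n) be the number of functions c : ℤ/n × ℤ/n → {0,1} such that for every i ∈ ℤ/n the functions c(i, ·) and c(i+1, ·) are not comparable, and for every j ∈ ℤ/n the functions c(·, j) and c(·, j+1) are not comparable. Then lim_{n→∞} N_nc(n, n) / 2^{n²} = 1. -/
/-- The number of crossing functions `c : ℤ/n × ℤ/n → {0,1}` in which no two
cyclically adjacent warps and no two cyclically adjacent wefts are comparable. -/
noncomputable def Nnc (n : ℕ) : ℕ :=
  Nat.card {c : ZMod n × ZMod n → Bool //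
    (∀ i : ZMod n, ¬ BoolComparable (fun j => c (i, j)) (fun j => c (i + 1, j))) ∧
    (∀ j : ZMod n, ¬ BoolComparable (fun i => c (i, j)) (fun i => c (i, j + 1)))}

open Finset Filter

section aux

variable {n : ℕ}

lemma warpEvent_card_le [NeZero n] (u v : ZMod n) (huv : u ≠ v) :
    Fintype.card {c : ZMod n × ZMod n → Bool // ∀ j, c (u, j) ≤ c (v, j)} ≤
      3 ^ n * 2 ^ ((n - 2) * n) := by
  classical
  have hinj : Function.Injective
      (fun c : {c : ZMod n × ZMod n → Bool // ∀ j, c (u, j) ≤ c (v, j)} =>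
        ((fun j => ⟨(c.1 (u, j), c.1 (v, j)), c.2 j⟩, fun q => c.1 (q.1.1, q.2)) :
          (ZMod n → {p : Bool × Bool // p.1 ≤ p.2}) ×
            (({x : ZMod n // x ≠ u ∧ x ≠ v} × ZMod n) → Bool))) := by
    rintro ⟨c, hc⟩ ⟨c', hc'⟩ h
    simp only [Prod.mk.injEq] at h
    obtain ⟨h1, h2⟩ := h
    apply Subtype.ext
    funext p
    obtain ⟨a, j⟩ := p
    have h1' := congrFun h1 j
    rw [Subtype.mk.injEq, Prod.mk.injEq] at h1'
    by_cases ha : a = u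
    · subst ha; exact h1'.1
    · by_cases hb : a = v
      · subst hb; exact h1'.2
      · exact congrFun h2 (⟨⟨a, ha, hb⟩, j⟩)
  have hle := Fintype.card_le_of_injective _ hinj
  refine hle.trans (le_of_eq ?_)
  rw [Fintype.card_prod, Fintype.card_fun, Fintype.card_fun, Fintype.card_prod,
    Fintype.card_bool, ZMod.card]
  have h3 : Fintype.card {p : Bool × Bool // p.1 ≤ p.2} = 3 := by decide
  have h2' : Fintype.card {x : ZMod n // x ≠ u ∧ x ≠ v} = n - 2 := by
    rw [Fintype.card_subtype]
    have : univ.filter (fun x : ZMod n => x ≠ u ∧ x ≠ v) = univ \ {u, v} := by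
      ext x; simp [not_or]
    rw [this, card_sdiff_of_subset (subset_univ _), card_univ, ZMod.card,
      card_insert_of_notMem (by simp [huv]), card_singleton]
  rw [h3, h2']

lemma weftEvent_card_le [NeZero n] (u v : ZMod n) (huv : u ≠ v) :
    Fintype.card {c : ZMod n × ZMod n → Bool // ∀ j, c (j, u) ≤ c (j, v)} ≤
      3 ^ n * 2 ^ ((n - 2) * n) := by
  have e : {c : ZMod n × ZMod n → Bool // ∀ j, c (j, u) ≤ c (j, v)} ≃
      {c : ZMod n × ZMod n → Bool // ∀ j, c (u, j) ≤ c (v, j)} :=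
    { toFun := fun c => ⟨fun p => c.1 p.swap, fun j => c.2 j⟩
      invFun := fun c => ⟨fun p => c.1 p.swap, fun j => c.2 j⟩
      left_inv := fun c => rfl
      right_inv := fun c => rfl }
  rw [Fintype.card_congr e]
  exact warpEvent_card_le u v huv

lemma self_ne_add_one (hn : 2 ≤ n) (i : ZMod n) : i ≠ i + 1 := by
  haveI : Fact (1 < n) := ⟨by omega⟩
  intro h
  exact one_ne_zero (left_eq_add.mp h)

lemma Nnc_le (hn : 1 ≤ n) : Nnc n ≤ 2 ^ (n ^ 2) := by
  haveI : NeZero n := ⟨by omega⟩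
  have := Nat.card_le_card_of_injective _
    (Subtype.val_injective (p := fun c : ZMod n × ZMod n → Bool =>
      (∀ i : ZMod n, ¬ BoolComparable (fun j => c (i, j)) (fun j => c (i + 1, j))) ∧
      (∀ j : ZMod n, ¬ BoolComparable (fun i => c (i, j)) (fun i => c (i, j + 1)))))
  refine this.trans (le_of_eq ?_)
  rw [Nat.card_eq_fintype_card, Fintype.card_fun, Fintype.card_prod, Fintype.card_bool,
    ZMod.card, ← pow_two]

lemma key (hn : 2 ≤ n) :
    2 ^ (n ^ 2) ≤ Nnc n + 4 * n * (3 ^ n * 2 ^ ((n - 2) * n)) := by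
  haveI : NeZero n := ⟨by omega⟩
  classical
  set T := (ZMod n × ZMod n → Bool)
  set G : T → Prop := fun c =>
    (∀ i : ZMod n, ¬ BoolComparable (fun j => c (i, j)) (fun j => c (i + 1, j))) ∧
    (∀ j : ZMod n, ¬ BoolComparable (fun i => c (i, j)) (fun i => c (i, j + 1))) with hG
  have hNnc : Nnc n = (univ.filter G).card := by
    rw [Nnc, Nat.card_eq_fintype_card, Fintype.card_subtype]
  have htot : (univ : Finset T).card = 2 ^ (n ^ 2) := by
    rw [card_univ]
    show Fintype.card (ZMod n × ZMod n → Bool) = _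
    rw [Fintype.card_fun, Fintype.card_prod, Fintype.card_bool, ZMod.card, ← pow_two]
  have hsplit : (univ.filter G).card + (univ.filter (fun c => ¬ G c)).card = 2 ^ (n ^ 2) := by
    rw [Finset.card_filter_add_card_filter_not, htot]
  set M := 3 ^ n * 2 ^ ((n - 2) * n) with hM
  have hfilter_le : ∀ u v : ZMod n, u ≠ v →
      (univ.filter (fun c : T => ∀ j, c (u, j) ≤ c (v, j))).card ≤ M := by
    intro u v huv
    rw [← Fintype.card_subtype]
    exact warpEvent_card_le u v huv
  have hfilter_le' : ∀ u v : ZMod n, u ≠ v →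
      (univ.filter (fun c : T => ∀ j, c (j, u) ≤ c (j, v))).card ≤ M := by
    intro u v huv
    rw [← Fintype.card_subtype]
    exact weftEvent_card_le u v huv
  have hbad : (univ.filter (fun c : T => ¬ G c)).card ≤ 4 * n * M := by
    have hsub : univ.filter (fun c : T => ¬ G c) ⊆
        univ.biUnion (fun i : ZMod n =>
          ((univ.filter (fun c : T => ∀ j, c (i, j) ≤ c (i + 1, j)) ∪
            univ.filter (fun c : T => ∀ j, c (i + 1, j) ≤ c (i, j))) ∪
           (univ.filter (fun c : T => ∀ j, c (j, i) ≤ c (j, i + 1)) ∪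
            univ.filter (fun c : T => ∀ j, c (j, i + 1) ≤ c (j, i))))) := by
      intro c hc
      simp only [mem_filter, mem_univ, true_and] at hc
      rw [hG, not_and_or] at hc
      rw [mem_biUnion]
      rcases hc with hc | hc
      · push_neg at hc
        obtain ⟨i, hi⟩ := hc
        refine ⟨i, mem_univ _, ?_⟩
        simp only [mem_union, mem_filter, mem_univ, true_and]
        rcases hi with h | h
        · exact Or.inl (Or.inl fun j => h j)
        · exact Or.inl (Or.inr fun j => h j)
      · push_neg at hc
        obtain ⟨i, hi⟩ := hc
        refine ⟨i, mem_univ _, ?_⟩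
        simp only [mem_union, mem_filter, mem_univ, true_and]
        rcases hi with h | h
        · exact Or.inr (Or.inl fun j => h j)
        · exact Or.inr (Or.inr fun j => h j)
    refine (card_le_card hsub).trans ((card_biUnion_le).trans ?_)
    have hterm : ∀ i : ZMod n,
        (((univ.filter (fun c : T => ∀ j, c (i, j) ≤ c (i + 1, j)) ∪
            univ.filter (fun c : T => ∀ j, c (i + 1, j) ≤ c (i, j))) ∪
           (univ.filter (fun c : T => ∀ j, c (j, i) ≤ c (j, i + 1)) ∪
            univ.filter (fun c : T => ∀ j, c (j, i + 1) ≤ c (j, i))))).card ≤ 4 * M := by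
      intro i
      have hne := self_ne_add_one hn i
      have h1 := hfilter_le i (i + 1) hne
      have h2 := hfilter_le (i + 1) i hne.symm
      have h3 := hfilter_le' i (i + 1) hne
      have h4 := hfilter_le' (i + 1) i hne.symm
      refine (card_union_le _ _).trans ?_
      refine (Nat.add_le_add (card_union_le _ _) (card_union_le _ _)).trans ?_
      refine le_trans (Nat.add_le_add (Nat.add_le_add h1 h2) (Nat.add_le_add h3 h4)) ?_
      exact le_of_eq (by ring)
    refine le_trans (Finset.sum_le_sum fun i _ => hterm i) ?_
    rw [Finset.sum_const, card_univ, ZMod.card, smul_eq_mul]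
    exact le_of_eq (by ring)
  rw [hNnc, ← hsplit]
  exact Nat.add_le_add_left hbad _

end aux

/-- The proportion `N_nc(n,n) / 2^{n²}` tends to `1` as `n → ∞`. -/
theorem noncomparable_proportion_tendsto_one :
    Filter.Tendsto (fun n : ℕ => (Nnc n : ℝ) / 2 ^ (n ^ 2)) Filter.atTop (nhds 1) := by
  have h0 : Tendsto (fun n : ℕ => 1 - 4 * ((n : ℝ) * (3 / 4 : ℝ) ^ n)) atTop (nhds 1) := by
    have h := (tendsto_self_mul_const_pow_of_lt_one (r := (3 / 4 : ℝ))
      (by norm_num) (by norm_num)).const_mul 4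
    have := tendsto_const_nhds (x := (1 : ℝ)) (f := atTop (α := ℕ)) |>.sub h
    simpa using this
  refine tendsto_of_tendsto_of_tendsto_of_le_of_le' h0 tendsto_const_nhds ?_ ?_
  · filter_upwards [eventually_ge_atTop 2] with n hn
    have hkey := key hn
    have hpos : (0 : ℝ) < 2 ^ (n ^ 2) := by positivity
    rw [le_div_iff₀ hpos]
    have hexp : (n - 2) * n + 2 * n = n ^ 2 := by
      rw [Nat.sub_mul, Nat.sub_add_cancel (Nat.mul_le_mul_right n hn), ← pow_two]
    have hE : (3 / 4 : ℝ) ^ n * 2 ^ (n ^ 2) = 3 ^ n * 2 ^ ((n - 2) * n) := by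
      rw [← hexp, pow_add]
      have h4 : (2 : ℝ) ^ (2 * n) = 4 ^ n := by
        rw [pow_mul]; norm_num
      rw [h4, div_pow]
      have : (4 : ℝ) ^ n ≠ 0 := by positivity
      field_simp
    have hcast : (2 : ℝ) ^ (n ^ 2) ≤ (Nnc n : ℝ) + 4 * n * (3 ^ n * 2 ^ ((n - 2) * n)) := by
      have := hkey
      exact_mod_cast Nat.cast_le.mpr this |>.trans_eq (by push_cast; ring)
    nlinarith [hE, hcast]
  · filter_upwards [eventually_ge_atTop 1] with n hn
    have h := Nnc_le hn
    have hpos : (0 : ℝ) < 2 ^ (n ^ 2) := by positivity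
    rw [div_le_one hpos]
    exact_mod_cast h
end
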